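/- Let n ≥ 1, let f be a probability density on ℝ, and let g be another probability density on ℝ with cdf G and order statistic densities g_(i)(x) = i·C(n,i)·G(x)^{i-1}·(1-G(x))^{n-i}·g(x). Suppose all KL integrals below exist. Then the KL information between an SRS from f and an SRS from g is at most that between an SRS from f and a perfect RSS from g: n·K(f,g) ≤ Σ_{i=1}^n K(f, g_(i)). -/

import Mathlib

/-!
Pointwise, `log (f / g_(i)) = log (f / g) - log wᵢ` with `wᵢ = i·C(n,i)·G^(i-1)·(1-G)^(n-i)`.
Since `i·C(n,i) = n·C(n-1,i-1)`, the binomial theorem gives `∑ wᵢ = n`, so `log w ≤ w - 1` yields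
`∑ log wᵢ ≤ 0`; this needs `0 < G < 1`, which holds wherever `g > 0` outside a null set,
because `G` is the distribution function of the measure with density `g`. Integrating the
pointwise inequality gives the theorem.
-/

open MeasureTheory Real

/-- Cumulative distribution function of a density `g`. -/
noncomputable def cdfOf (g : ℝ → ℝ) (x : ℝ) : ℝ := ∫ t in Set.Iic x, g t

/-- Density of the `i`-th order statistic from a sample of size `n` with parent density `g`. -/
noncomputable def osDen (g : ℝ → ℝ) (n i : ℕ) (x : ℝ) : ℝ :=
  (i : ℝ) * (n.choose i : ℝ) * (cdfOf g x) ^ (i - 1) * (1 - cdfOf g x) ^ (n - i) * g x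

/-- Kullback–Leibler divergence between densities `p` and `q`. -/
noncomputable def KL (p q : ℝ → ℝ) : ℝ := ∫ x, p x * Real.log (p x / q x)

open Finset

/-- `osDen g n i x` is definitionally `osWeight n i (cdfOf g x) * g x`. -/
noncomputable def osWeight (n i : ℕ) (t : ℝ) : ℝ :=
  i * n.choose i * t ^ (i - 1) * (1 - t) ^ (n - i)

theorem sum_osWeight (n : ℕ) (t : ℝ) : ∑ i ∈ Icc 1 n, osWeight n i t = n := by
  cases n with
  | zero => simp
  | succ m =>
    have hterm (j : ℕ) : osWeight (m + 1) (j + 1) t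
        = (m + 1) * (m.choose j * t ^ j * (1 - t) ^ (m - j)) := by
      have hchoose : ((j + 1 : ℕ) : ℝ) * (m + 1).choose (j + 1) = (m + 1) * m.choose j := by
        exact_mod_cast (mul_comm _ _).trans (Nat.add_one_mul_choose_eq m j).symm
      simp only [osWeight, Nat.add_sub_cancel, Nat.add_sub_add_right, hchoose]
      ring
    calc ∑ i ∈ Icc 1 (m + 1), osWeight (m + 1) i t
        = ∑ j ∈ range (m + 1), osWeight (m + 1) (j + 1) t := by
          rw [range_eq_Ico, sum_Ico_add' (fun i => osWeight (m + 1) i t) 0 (m + 1) 1]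
          rfl
      _ = (m + 1) * (t + (1 - t)) ^ m := by
          rw [add_pow, mul_sum]
          exact sum_congr rfl fun j _ => by rw [hterm]; ring
      _ = (m + 1 : ℕ) := by simp

theorem osWeight_pos {n i : ℕ} {t : ℝ} (hi : i ∈ Icc 1 n) (ht₀ : 0 < t) (ht₁ : t < 1) :
    0 < osWeight n i t := by
  obtain ⟨hi₁, hin⟩ := mem_Icc.1 hi
  have hi_pos : (0 : ℝ) < i := by exact_mod_cast hi₁
  have hchoose_pos : (0 : ℝ) < n.choose i := by exact_mod_cast Nat.choose_pos hin
  have ht₁' : 0 < 1 - t := sub_pos.2 ht₁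
  unfold osWeight
  positivity

theorem sum_log_nonpos_of_sum_eq_card {ι : Type*} {s : Finset ι} {w : ι → ℝ}
    (hw : ∀ i ∈ s, 0 < w i) (hsum : ∑ i ∈ s, w i = #s) : ∑ i ∈ s, log (w i) ≤ 0 :=
  calc ∑ i ∈ s, log (w i) ≤ ∑ i ∈ s, (w i - 1) :=
        sum_le_sum fun i hi => log_le_sub_one_of_pos (hw i hi)
    _ = 0 := by simp [sum_sub_distrib, hsum]

theorem card_mul_mul_log_div_le_sum {ι : Type*} {s : Finset ι} {w : ι → ℝ}
    (hw : ∀ i ∈ s, 0 < w i) (hsum : ∑ i ∈ s, w i = #s) {a b : ℝ} (ha : 0 ≤ a) (hb : b ≠ 0) :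
    #s * (a * log (a / b)) ≤ ∑ i ∈ s, a * log (a / (w i * b)) := by
  rcases ha.eq_or_lt with rfl | ha
  · simp
  have hterm : ∀ i ∈ s, a * log (a / (w i * b)) = a * log (a / b) - a * log (w i) := by
    intro i hi
    rw [mul_comm (w i), ← div_div, log_div (div_ne_zero ha.ne' hb) (hw i hi).ne', mul_sub]
  rw [sum_congr rfl hterm, sum_sub_distrib, sum_const, nsmul_eq_mul, ← mul_sum]
  have := mul_nonpos_of_nonneg_of_nonpos ha.le (sum_log_nonpos_of_sum_eq_card hw hsum)
  linarith

theorem ae_measure_Iic_ne_zero (μ : Measure ℝ) : ∀ᵐ x ∂μ, μ (Set.Iic x) ≠ 0 := by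
  set S := {x | μ (Set.Iic x) = 0}
  refine ae_iff.2 (measure_mono_null (fun x hx => not_not.1 hx) ?_)
  change μ S = 0
  by_cases hmax : ∃ a, IsGreatest S a
  · obtain ⟨a, ha, ha_ub⟩ := hmax
    exact measure_mono_null (fun x hx => ha_ub hx) ha
  · have hcover : S ⊆ ⋃ (q : ℚ) (_ : μ (Set.Iic (q : ℝ)) = 0), Set.Iic (q : ℝ) := by
      intro x hx
      obtain ⟨y, hy, hxy⟩ : ∃ y ∈ S, x < y := by
        by_contra! h
        exact hmax ⟨x, hx, h⟩
      obtain ⟨q, hxq, hqy⟩ := exists_rat_btwn hxy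
      exact Set.mem_biUnion (measure_mono_null (Set.Iic_subset_Iic.2 hqy.le) hy) hxq.le
    exact measure_mono_null hcover (measure_iUnion_null fun q => measure_iUnion_null id)

theorem ae_measure_Ici_ne_zero (μ : Measure ℝ) : ∀ᵐ x ∂μ, μ (Set.Ici x) ≠ 0 := by
  have h := ae_measure_Iic_ne_zero (μ.map (MeasurableEquiv.neg ℝ))
  rw [(MeasurableEquiv.neg ℝ).measurableEmbedding.ae_map_iff] at h
  filter_upwards [h] with x hx
  rwa [MeasurableEquiv.map_apply, MeasurableEquiv.neg_apply, Set.neg_preimage, Set.neg_Iic,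
    neg_neg] at hx

theorem ae_cdfOf_mem_Ioo {g : ℝ → ℝ} (hg_nonneg : ∀ x, 0 ≤ g x) (hg_int : ∫ x, g x = 1) :
    ∀ᵐ x, g x ≠ 0 → cdfOf g x ∈ Set.Ioo 0 1 := by
  have hg : Integrable g := Integrable.of_integral_ne_zero (by simp [hg_int])
  set μ := volume.withDensity (fun x => ENNReal.ofReal (g x))
  have hμ {s : Set ℝ} (hs : MeasurableSet s) : μ s = ENNReal.ofReal (∫ x in s, g x) := by
    rw [withDensity_apply _ hs, ofReal_integral_eq_lintegral_ofReal hg.integrableOn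
      (ae_of_all _ fun x => hg_nonneg x)]
  have hIci (x : ℝ) : ∫ t in Set.Ici x, g t = 1 - cdfOf g x := by
    rw [setIntegral_congr_set Ioi_ae_eq_Ici.symm, ← Set.compl_Iic,
      setIntegral_compl measurableSet_Iic hg, hg_int, cdfOf]
  have hae := (ae_withDensity_iff' hg.aemeasurable.ennreal_ofReal).1
    ((ae_measure_Iic_ne_zero μ).and (ae_measure_Ici_ne_zero μ))
  filter_upwards [hae] with x hx hgx
  obtain ⟨hIic_pos, hIci_pos⟩ := hx (by simpa using (hg_nonneg x).lt_of_ne' hgx)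
  rw [hμ measurableSet_Iic, ← pos_iff_ne_zero, ENNReal.ofReal_pos] at hIic_pos
  rw [hμ measurableSet_Ici, ← pos_iff_ne_zero, ENNReal.ofReal_pos, hIci] at hIci_pos
  exact ⟨hIic_pos, by linarith⟩

theorem KL_SRS_SRS_le_KL_SRS_RSS_general (n : ℕ) (f g : ℝ → ℝ)
    (hf_nonneg : ∀ x, 0 ≤ f x)
    (hg_nonneg : ∀ x, 0 ≤ g x) (hg_int : ∫ x, g x = 1)
    (hfg : Integrable (fun x => f x * Real.log (f x / g x)))
    (hfgi : ∀ i ∈ Finset.Icc 1 n,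
      Integrable (fun x => f x * Real.log (f x / osDen g n i x))) :
    (n : ℝ) * KL f g ≤ ∑ i ∈ Finset.Icc 1 n, KL f (osDen g n i) := by
  have hpointwise : ∀ᵐ x, (n : ℝ) * (f x * log (f x / g x))
      ≤ ∑ i ∈ Icc 1 n, f x * log (f x / osDen g n i x) := by
    filter_upwards [ae_cdfOf_mem_Ioo hg_nonneg hg_int] with x hx
    rcases eq_or_ne (g x) 0 with hgx | hgx
    · simp [osDen, hgx]
    obtain ⟨ht₀, ht₁⟩ := hx hgx
    have hcard : #(Icc 1 n) = n := by simp
    have hweights := card_mul_mul_log_div_le_sum (s := Icc 1 n)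
      (fun i hi => osWeight_pos hi ht₀ ht₁) (by rw [hcard]; exact sum_osWeight n _)
      (hf_nonneg x) hgx
    rwa [hcard] at hweights
  calc (n : ℝ) * KL f g = ∫ x, (n : ℝ) * (f x * log (f x / g x)) :=
        (integral_const_mul _ _).symm
    _ ≤ ∫ x, ∑ i ∈ Icc 1 n, f x * log (f x / osDen g n i x) :=
        integral_mono_ae (hfg.const_mul _) (integrable_finsetSum _ hfgi) hpointwise
    _ = ∑ i ∈ Icc 1 n, KL f (osDen g n i) := integral_finsetSum _ hfgi

/-- The KL information between an SRS from `f` and an SRS from `g` is at most that between an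
SRS from `f` and a perfect RSS from `g`: `n·K(f,g) ≤ Σ_{i=1}^n K(f, g_(i))`. -/
theorem KL_SRS_SRS_le_KL_SRS_RSS (n : ℕ) (hn : 1 ≤ n) (f g : ℝ → ℝ)
    (hf_meas : Measurable f) (hf_nonneg : ∀ x, 0 ≤ f x) (hf_int : ∫ x, f x = 1)
    (hg_meas : Measurable g) (hg_nonneg : ∀ x, 0 ≤ g x) (hg_int : ∫ x, g x = 1)
    (hfg : Integrable (fun x => f x * Real.log (f x / g x)))
    (hfgi : ∀ i ∈ Finset.Icc 1 n,
      Integrable (fun x => f x * Real.log (f x / osDen g n i x))) :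
    (n : ℝ) * KL f g ≤ ∑ i ∈ Finset.Icc 1 n, KL f (osDen g n i) :=
  KL_SRS_SRS_le_KL_SRS_RSS_general n f g hf_nonneg hg_nonneg hg_int hfg hfgi
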